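/- arXiv:2405.12597 — 3 statements merged into one kernel-verified Lean document; each statement's English description precedes it below -/
import Mathlib

section
/- Let G be a group and let α, β ∈ G be two elements of infinite order. Then there exist a group H, an injective group homomorphism ι : G → H, and an element t ∈ H such that t⁻¹ ι(α) t = ι(β). -/
/-! The cyclic subgroups generated by `α` and `β` are both infinite cyclic, hence isomorphic via
`α ↦ β`; the HNN extension of `G` along this isomorphism contains `G` and its stable letter
conjugates `α` to `β`. -/

theorem exists_injective_conj_of_injective {G : Type u} [Group G] {K : Type*} [Group K]
    {f g : K →* G} (hf : Function.Injective f) (hg : Function.Injective g) :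
    ∃ (H : Type u) (_ : Group H) (ι : G →* H) (t : H),
      Function.Injective ι ∧ ∀ k, t⁻¹ * ι (f k) * t = ι (g k) := by
  -- Mathlib's stable letter satisfies `t * a * t⁻¹ = φ a`, so `φ` must run from `g` to `f`.
  let φ : g.range ≃* f.range := (MonoidHom.ofInjective hg).symm.trans (MonoidHom.ofInjective hf)
  refine ⟨HNNExtension G g.range f.range φ, inferInstance, HNNExtension.of, HNNExtension.t,
    HNNExtension.of_injective φ, fun k ↦ ?_⟩
  have hφ : φ.symm (MonoidHom.ofInjective hf k) = MonoidHom.ofInjective hg k := by simp [φ]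
  simpa only [hφ, MonoidHom.ofInjective_apply] using
    (HNNExtension.equiv_symm_eq_conj (φ := φ) (MonoidHom.ofInjective hf k)).symm

lemma injective_zpowersHom {G : Type*} [Group G] {x : G} (hx : ∀ n : ℤ, x ^ n = 1 → n = 0) :
    Function.Injective (zpowersHom G x) :=
  (injective_iff_map_eq_one _).2 fun n hn ↦ toAdd_eq_zero.1 (hx n.toAdd hn)

/-- Two elements of infinite order of a group become conjugate in some overgroup
(realized by an HNN extension). -/
theorem stmt2 (G : Type u) [Group G] (α β : G)
    (hα : ∀ n : ℤ, α ^ n = 1 → n = 0)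
    (hβ : ∀ n : ℤ, β ^ n = 1 → n = 0) :
    ∃ (H : Type u) (_ : Group H) (ι : G →* H) (t : H),
      Function.Injective ι ∧ t⁻¹ * ι α * t = ι β := by
  obtain ⟨H, _, ι, t, hι, hconj⟩ :=
    exists_injective_conj_of_injective (injective_zpowersHom hα) (injective_zpowersHom hβ)
  exact ⟨H, _, ι, t, hι, by simpa using hconj (Multiplicative.ofAdd 1)⟩
end

section
/- Let G be a torsion-free group, let A and B be subgroups of G, and let φ : A → B be a group isomorphism. Then the HNN extension of G with associated subgroups A and B along φ is torsion-free. -/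
/-!
Every element of finite order is conjugate into the base group. Write it as a reduced word and
conjugate its head to the end. If the resulting word is nonempty and cyclically reduced, all its
powers are reduced and nonempty, so by Britton's lemma none of them is trivial. Otherwise its last
and first letters form a pinch `t^u g t^(-u)` with `g ∈ toSubgroup A B u`, and conjugating by the
last letter gives a shorter reduced word. Finally an element conjugate to `of g` with `g` of finite
order is trivial, as `of` is injective and `G` is torsion-free.
-/

theorem isConj_mul_comm {α : Type*} [Group α] (a b : α) : IsConj (a * b) (b * a) :=
  isConj_iff.2 ⟨b, by group⟩

namespace HNNExtension

open NormalWord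

variable {G : Type*} [Group G] {A B : Subgroup G}

/-- A letter `(u, g)` stands for `t ^ u * of g`. This is the relation of `ReducedWord.chain`:
the letters `a b` do not form a pinch `t ^ u * of g * t ^ (-u)` with `g ∈ toSubgroup A B u`. -/
def NoPinch (A B : Subgroup G) (a b : ℤˣ × G) : Prop :=
  a.2 ∈ toSubgroup A B a.1 → a.1 = b.1

theorem noPinch_self (a : ℤˣ × G) : NoPinch A B a a := fun _ => rfl

theorem isChain_noPinch_append_singleton {M : List (ℤˣ × G)} {m m' : ℤˣ × G} (h : m.1 = m'.1)
    (hM : (M ++ [m]).IsChain (NoPinch A B)) : (M ++ [m']).IsChain (NoPinch A B) := by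
  rw [List.isChain_append] at hM ⊢
  obtain ⟨hM, -, hlast⟩ := hM
  refine ⟨hM, List.isChain_singleton m', fun x hx y hy => ?_⟩
  obtain rfl : m' = y := by simpa using hy
  exact fun hx2 => (hlast x hx m rfl hx2).trans h

variable (φ : A ≃* B)

def wordProd (L : List (ℤˣ × G)) : HNNExtension G A B φ :=
  (L.map fun x => t ^ (x.1 : ℤ) * of x.2).prod

@[simp]
theorem wordProd_nil : wordProd φ [] = 1 := rfl

@[simp]
theorem wordProd_cons (a : ℤˣ × G) (L : List (ℤˣ × G)) :
    wordProd φ (a :: L) = t ^ (a.1 : ℤ) * of a.2 * wordProd φ L :=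
  List.prod_cons

@[simp]
theorem wordProd_append (L K : List (ℤˣ × G)) :
    wordProd φ (L ++ K) = wordProd φ L * wordProd φ K := by
  simp [wordProd]

theorem wordProd_flatten_replicate (n : ℕ) (L : List (ℤˣ × G)) :
    wordProd φ (List.replicate n L).flatten = wordProd φ L ^ n := by
  induction n with
  | zero => simp
  | succ n ih => rw [List.replicate_succ, List.flatten_cons, wordProd_append, ih, pow_succ']

theorem NormalWord.ReducedWord.prod_eq_of_mul_wordProd (w : ReducedWord G A B) :
    w.prod φ = of w.head * wordProd φ w.toList := rfl

theorem t_zpow_mul_of {u : ℤˣ} {g : G} (hg : g ∈ toSubgroup A B u) :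
    (t ^ (u : ℤ) : HNNExtension G A B φ) * of g
      = of (toSubgroupEquiv φ u ⟨g, hg⟩ : G) * t ^ (u : ℤ) := by
  rcases Int.units_eq_one_or u with rfl | rfl
  · simp only [Units.val_one, zpow_one, toSubgroupEquiv_one]
    exact t_mul_of ⟨g, hg⟩
  · simp only [Units.val_neg, Units.val_one, zpow_neg, zpow_one, toSubgroupEquiv_neg_one]
    exact inv_t_mul_of ⟨g, hg⟩

theorem eq_nil_of_wordProd_mem_range {L : List (ℤˣ × G)} (hL : L.IsChain (NoPinch A B))
    (h : wordProd φ L ∈ (of : G →* HNNExtension G A B φ).range) : L = [] :=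
  ReducedWord.toList_eq_nil_of_mem_of_range φ ⟨1, L, hL⟩ (by
    rwa [ReducedWord.prod_eq_of_mul_wordProd, map_one, one_mul])

theorem not_isOfFinOrder_wordProd {a : ℤˣ × G} {K : List (ℤˣ × G)}
    (hL : (a :: K).IsChain (NoPinch A B))
    (hcyc : NoPinch A B ((a :: K).getLast (List.cons_ne_nil a K)) a) :
    ¬IsOfFinOrder (wordProd φ (a :: K)) := by
  intro hfin
  obtain ⟨n, hn, hpow⟩ := isOfFinOrder_iff_pow_eq_one.1 hfin
  have hchain : (List.replicate n (a :: K)).flatten.IsChain (NoPinch A B) := by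
    rw [List.isChain_flatten (by simp [List.mem_replicate])]
    refine ⟨fun l hl => (List.eq_of_mem_replicate hl) ▸ hL, List.isChain_replicate_of_rel n ?_⟩
    intro x hx y hy
    rw [List.getLast?_eq_some_getLast (List.cons_ne_nil a K), Option.mem_some_iff] at hx
    obtain rfl : a = y := by simpa using hy
    exact hx ▸ hcyc
  have hnil := eq_nil_of_wordProd_mem_range φ hchain
    (by rw [wordProd_flatten_replicate, hpow]; exact one_mem _)
  simp only [List.flatten_eq_nil_iff, List.mem_replicate, ne_eq, and_imp, forall_eq_apply_imp_iff,
    reduceCtorEq, imp_false, Decidable.not_not] at hnil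
  omega

theorem isConj_wordProd_cons_append_singleton {a b : ℤˣ × G} (M : List (ℤˣ × G))
    (hb : b.2 ∈ toSubgroup A B b.1) (hab : a.1 = -b.1) :
    IsConj (wordProd φ (a :: M ++ [b]))
      (of ((toSubgroupEquiv φ b.1 ⟨b.2, hb⟩ : G) * a.2) * wordProd φ M) := by
  have hsplit : wordProd φ (a :: M ++ [b])
      = (t ^ (a.1 : ℤ) * of a.2 * wordProd φ M) * (t ^ (b.1 : ℤ) * of b.2) := by
    simp [mul_assoc]
  rw [hsplit]
  convert isConj_mul_comm _ _ using 1
  rw [t_zpow_mul_of φ hb, hab, Units.val_neg, zpow_neg]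
  simp [mul_assoc]

theorem isConj_of_mul_wordProd_append_singleton (c : G) (M : List (ℤˣ × G)) (m : ℤˣ × G) :
    IsConj (of c * wordProd φ (M ++ [m])) (wordProd φ (M ++ [(m.1, m.2 * c)])) := by
  convert isConj_mul_comm _ _ using 1
  simp [mul_assoc]

theorem exists_isConj_of_mul_wordProd_of_not_noPinch {a : ℤˣ × G} {K : List (ℤˣ × G)}
    (hL : (a :: K).IsChain (NoPinch A B))
    (hcyc : ¬NoPinch A B ((a :: K).getLast (List.cons_ne_nil a K)) a) :
    ∃ (c : G) (M : List (ℤˣ × G)), M.length < K.length ∧ M.IsChain (NoPinch A B) ∧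
      IsConj (wordProd φ (a :: K)) (of c * wordProd φ M) := by
  rcases K.eq_nil_or_concat' with rfl | ⟨M, b, rfl⟩
  · exact absurd (noPinch_self a) hcyc
  simp only [ne_eq, List.append_eq_nil_iff, List.cons_ne_self, and_false, not_false_eq_true,
    List.getLast_cons, List.getLast_append_of_ne_nil, List.getLast_singleton] at hcyc
  obtain ⟨hb, hba⟩ := Classical.not_imp.1 hcyc
  refine ⟨_, M, by simp, hL.tail.left_of_append,
    isConj_wordProd_cons_append_singleton φ M hb (Int.units_ne_iff_eq_neg.1 (Ne.symm hba))⟩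

theorem exists_isConj_of_of_mul_wordProd (c : G) (L : List (ℤˣ × G))
    (hL : L.IsChain (NoPinch A B)) (hfin : IsOfFinOrder (of c * wordProd φ L)) :
    ∃ g : G, IsConj (of c * wordProd φ L) (of g) := by
  induction hn : L.length using Nat.strong_induction_on generalizing c L with
  | _ n ih =>
  rcases L.eq_nil_or_concat' with rfl | ⟨M, m, rfl⟩
  · exact ⟨c, by rw [wordProd_nil, mul_one]⟩
  obtain ⟨a, K, hK⟩ := List.exists_cons_of_ne_nil (List.concat_ne_nil (m.1, m.2 * c) M)
  have hrot : IsConj (of c * wordProd φ (M ++ [m])) (wordProd φ (a :: K)) :=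
    hK ▸ isConj_of_mul_wordProd_append_singleton φ c M m
  have hK' : (a :: K).IsChain (NoPinch A B) := 
    hK ▸ isChain_noPinch_append_singleton (m := m) rfl hL
  by_cases hcyc : NoPinch A B ((a :: K).getLast (List.cons_ne_nil a K)) a
  · exact absurd (hrot.isOfFinOrder hfin) (not_isOfFinOrder_wordProd φ hK' hcyc)
  obtain ⟨c', M', hlen, hM', hconj⟩ := exists_isConj_of_mul_wordProd_of_not_noPinch φ hK' hcyc
  have hKn : K.length + 1 = n := by
    simpa [← hn] using congrArg List.length hK.symm
  obtain ⟨g, hg⟩ := ih _ (by omega) c' M' hM' ((hrot.trans hconj).isOfFinOrder hfin) rfl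
  exact ⟨g, (hrot.trans hconj).trans hg⟩

variable {φ} in
theorem exists_isConj_of_of_isOfFinOrder {x : HNNExtension G A B φ} (hx : IsOfFinOrder x) :
    ∃ g : G, IsConj x (of g) := by
  obtain ⟨d⟩ := TransversalPair.nonempty G A B
  obtain ⟨w, rfl⟩ := (NormalWord.equiv φ d).symm.surjective x
  exact exists_isConj_of_of_mul_wordProd φ w.head w.toList w.chain hx

end HNNExtension

/-- An HNN extension of a torsion-free group is torsion-free. -/
theorem stmt3 (G : Type*) [Group G] (A B : Subgroup G) (φ : A ≃* B)
    (hG : ∀ g : G, g ≠ 1 → ¬IsOfFinOrder g) :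
    ∀ g : HNNExtension G A B φ, g ≠ 1 → ¬IsOfFinOrder g := by
  intro x hx hfin
  obtain ⟨g, hg⟩ := HNNExtension.exists_isConj_of_of_isOfFinOrder hfin
  have hg1 : g = 1 := by
    by_contra hg1
    exact hG g hg1
      ((HNNExtension.of_injective (φ := φ)).isOfFinOrder_iff.1 (hg.isOfFinOrder hfin))
  rw [hg1, map_one, isConj_comm, isConj_one_right] at hg
  exact hx hg
end

section
/- For every torsion-free group G there exist a torsion-free group H and an injective group homomorphism ι : G → H such that for any two non-identity elements α, β ∈ G, the images ι(α) and ι(β) are conjugate in H. Moreover, if G is countable then H can be chosen countable. -/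
/-!
Take for `H` the amalgamated product over `G` of the HNN extensions
`⟨G, t | t α t⁻¹ = β⟩`, one for each pair `α, β ≠ 1`; in a torsion-free group these
elements have infinite order, so `⟨α⟩ ≅ ⟨β⟩` by `α ↦ β`.

Torsion-freeness of HNN extensions and of amalgamated products is one argument on
reduced words. Write `x = s * w` with `s` in the base and `w` reduced. Conjugating by `s`
absorbs it into the last letter of `w`; if the last and first letters do not form a reduced
pair, conjugating by the last letter merges them and shortens the word. Otherwise `w` is
cyclically reduced, so all its powers are reduced words, and by Britton's lemma none of
them is `1`.
-/

/-- A monoid is torsion-free if no element other than `1` has finite order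
(the definition of `Monoid.IsTorsionFree` in the older Mathlib, since removed). -/
def Monoid.IsTorsionFree (G : Type*) [Monoid G] : Prop :=
  ∀ g : G, g ≠ 1 → ¬IsOfFinOrder g

open List

theorem List.IsChain.flatten_replicate {α : Type*} {R : α → α → Prop} {l : List α}
    (h : (l ++ l).IsChain R) (n : ℕ) : (replicate n l).flatten.IsChain R := by
  rcases eq_or_ne l [] with rfl | hl
  · simp
  suffices ∀ n, ((replicate n l).flatten ++ l).IsChain R from (this n).left_of_append
  intro n
  induction n with
  | zero => simpa using h.left_of_append
  | succ n ih =>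
    rw [replicate_succ', flatten_concat]
    exact ih.append_overlap h hl

theorem IsConj.eq_one_of_isOfFinOrder {X : Type*} [Group X] {x y : X} (hxy : IsConj x y)
    (hy : IsOfFinOrder y → y = 1) (hx : IsOfFinOrder x) : x = 1 :=
  isConj_one_left.1 (hy (hxy.isOfFinOrder hx) ▸ hxy)

theorem Monoid.IsTorsionFree.eq_one_of_mem_range {N X : Type*} [Group N] [Group X]
    (hN : Monoid.IsTorsionFree N) {f : N →* X} (hf : Function.Injective f) :
    ∀ x ∈ f.range, IsOfFinOrder x → x = 1 := by
  rintro _ ⟨n, rfl⟩ hn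
  by_contra h
  exact hN n (by rintro rfl; exact h (map_one f)) (hf.isOfFinOrder_iff.1 hn)

/-- Normal forms `s * (l.map f).prod` with `s ∈ S` and `l` a reduced word, i.e. an `r`-chain,
satisfying Britton's lemma. The last two fields are the moves of cyclic reduction: absorbing an
element of `S` into the last letter, and merging two letters that do not form a reduced pair. -/
structure BrittonNormalForm {X L : Type*} [Group X] (S : Subgroup X) (f : L → X)
    (r : L → L → Prop) : Prop where
  exists_eq_mul_prod (x : X) : ∃ s ∈ S, ∃ l : List L, l.IsChain r ∧ x = s * (l.map f).prod
  eq_nil_of_prod_mem {l : List L} : l.IsChain r → (l.map f).prod ∈ S → l = []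
  exists_mul_eq (a : L) {s : X} : s ∈ S → ∃ a', f a * s = f a' ∧ ∀ c, r c a → r c a'
  mul_mem_or_exists_mul_eq {a b : L} : ¬r a b →
    f a * f b ∈ S ∨ ∃ c, f a * f b = f c ∧ ∀ d, r b d → r c d

namespace BrittonNormalForm

variable {X L : Type*} [Group X] {S : Subgroup X} {f : L → X} {r : L → L → Prop}

theorem not_isOfFinOrder_prod (hB : BrittonNormalForm S f r) {l : List L} (hl : l ≠ [])
    (hll : (l ++ l).IsChain r) :
    ¬IsOfFinOrder (l.map f).prod := by
  rw [isOfFinOrder_iff_pow_eq_one]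
  rintro ⟨n, hn, hpow⟩
  have hnil := hB.eq_nil_of_prod_mem (hll.flatten_replicate n)
    (by simp [map_flatten, prod_flatten, hpow, one_mem])
  exact hl (flatten_eq_nil_iff.1 hnil l (mem_replicate.2 ⟨hn.ne', rfl⟩))

theorem eq_one_of_isOfFinOrder_prod (hB : BrittonNormalForm S f r)
    (hL : ∀ a, ¬r a a → ¬IsOfFinOrder (f a)) {l : List L} (hl : l.IsChain r)
    (hshorter : ∀ s ∈ S, ∀ l' : List L, l'.IsChain r → l'.length < l.length →
      IsOfFinOrder (s * (l'.map f).prod) → s * (l'.map f).prod = 1) :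
    IsOfFinOrder (l.map f).prod → (l.map f).prod = 1 := by
  rcases l with _ | ⟨b, l⟩
  · simp
  rcases l.eq_nil_or_concat' with rfl | ⟨m, a, rfl⟩
  · by_cases hbb : r b b
    · exact fun h => absurd h (hB.not_isOfFinOrder_prod (cons_ne_nil b []) (isChain_pair.2 hbb))
    · exact fun h => absurd (by simpa using h) (hL b hbb)
  by_cases hab : r a b
  · refine fun h => absurd h (hB.not_isOfFinOrder_prod (cons_ne_nil _ _) (hl.append hl ?_))
    rw [← cons_append, getLast?_concat]
    simpa using hab
  have hconj : IsConj ((b :: (m ++ [a])).map f).prod (f a * f b * (m.map f).prod) :=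
    isConj_iff.2 ⟨f a, by simp [mul_assoc]⟩
  have hm : m.IsChain r := hl.tail.left_of_append
  refine hconj.eq_one_of_isOfFinOrder ?_
  rcases hB.mul_mem_or_exists_mul_eq hab with hmem | ⟨c, hc, hbc⟩
  · exact hshorter _ hmem m hm (by simp)
  · have hcm : (c :: m).IsChain r := (hl.left_of_append (l₂ := [a])).imp_head (hbc _)
    simpa [hc, mul_assoc] using hshorter 1 S.one_mem (c :: m) hcm (by simp)

theorem eq_one_of_isOfFinOrder_mul_prod (hB : BrittonNormalForm S f r)
    (hS : ∀ s ∈ S, IsOfFinOrder s → s = 1) (hL : ∀ a, ¬r a a → ¬IsOfFinOrder (f a))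
    {s : X} (hs : s ∈ S) {l : List L} (hl : l.IsChain r) :
    IsOfFinOrder (s * (l.map f).prod) → s * (l.map f).prod = 1 := by
  induction hn : l.length using Nat.strong_induction_on generalizing s l with
  | _ n ih =>
  subst hn
  rcases l.eq_nil_or_concat' with rfl | ⟨m, a, rfl⟩
  · simpa using hS s hs
  obtain ⟨a', ha', hra⟩ := hB.exists_mul_eq a hs
  have hconj : IsConj (s * ((m ++ [a]).map f).prod) (((m ++ [a']).map f).prod) :=
    isConj_iff.2 ⟨s⁻¹, by simp [mul_assoc, ha']⟩
  have hl' : (m ++ [a']).IsChain r := by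
    rw [isChain_append] at hl
    refine isChain_append.2 ⟨hl.1, .singleton a', fun x hx y hy => ?_⟩
    obtain rfl : y = a' := by simpa using hy.symm
    exact hra x (hl.2.2 x hx a rfl)
  refine hconj.eq_one_of_isOfFinOrder (hB.eq_one_of_isOfFinOrder_prod hL hl' ?_)
  intro s' hs' l' hl'' hlen'
  exact ih l'.length (by simpa using hlen') hs' hl'' rfl

theorem isTorsionFree (hB : BrittonNormalForm S f r) (hS : ∀ s ∈ S, IsOfFinOrder s → s = 1)
    (hL : ∀ a, ¬r a a → ¬IsOfFinOrder (f a)) :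
    Monoid.IsTorsionFree X := by
  intro x hx hfin
  obtain ⟨s, hs, l, hl, rfl⟩ := hB.exists_eq_mul_prod x
  exact hx (hB.eq_one_of_isOfFinOrder_mul_prod hS hL hs hl hfin)

end BrittonNormalForm

namespace HNNExtension

variable {G : Type*} [Group G] {A B : Subgroup G} (φ : A ≃* B)

theorem t_zpow_mul_of_mul_t_zpow_neg_mem_range {u : ℤˣ} {g : G} (hg : g ∈ toSubgroup A B u) :
    t ^ (u : ℤ) * of g * t ^ (-(u : ℤ)) ∈ (of : G →* HNNExtension G A B φ).range := by
  rcases Int.units_eq_one_or u with rfl | rfl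
  · exact ⟨φ ⟨g, hg⟩, by simp [equiv_eq_conj]⟩
  · exact ⟨φ.symm ⟨g, hg⟩, by simp [equiv_symm_eq_conj]⟩

theorem brittonNormalForm :
    BrittonNormalForm (of : G →* HNNExtension G A B φ).range
      (fun p : ℤˣ × G => t ^ (p.1 : ℤ) * of p.2)
      (fun a b => a.2 ∈ toSubgroup A B a.1 → a.1 = b.1) where
  exists_eq_mul_prod x := by
    obtain ⟨d⟩ := NormalWord.TransversalPair.nonempty G A B
    let w := NormalWord.equiv φ d x
    exact ⟨of w.head, ⟨_, rfl⟩, w.toList, w.chain,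
      ((NormalWord.equiv φ d).symm_apply_apply x).symm⟩
  eq_nil_of_prod_mem hl hmem :=
    ReducedWord.toList_eq_nil_of_mem_of_range φ ⟨1, _, hl⟩
      (by simpa [NormalWord.ReducedWord.prod] using hmem)
  exists_mul_eq a s hs := by
    obtain ⟨h, rfl⟩ := hs
    exact ⟨(a.1, a.2 * h), by simp [mul_assoc], fun c hc => hc⟩
  mul_mem_or_exists_mul_eq {a b} hab := by
    left
    simp only [Classical.not_imp] at hab
    obtain ⟨hmem, hne⟩ := hab
    have hb : (b.1 : ℤ) = -(a.1 : ℤ) := by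
      rcases Int.units_eq_one_or a.1 with h | h <;> rcases Int.units_eq_one_or b.1 with h' | h' <;>
        simp_all
    have := t_zpow_mul_of_mul_t_zpow_neg_mem_range φ hmem
    rw [hb]
    simpa [mul_assoc] using mul_mem this ⟨b.2, rfl⟩

theorem isTorsionFree (hG : Monoid.IsTorsionFree G) :
    Monoid.IsTorsionFree (HNNExtension G A B φ) :=
  (brittonNormalForm φ).isTorsionFree (hG.eq_one_of_mem_range (of_injective φ))
    fun _ h => absurd (fun _ => rfl) h

end HNNExtension

namespace Monoid.PushoutI

open CoprodI

variable {ι : Type*} {K : ι → Type*} [∀ i, Group (K i)] {N : Type*} [Group N]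
  {φ : ∀ i, N →* K i}

theorem notMem_range_of_mem_set (d : NormalWord.Transversal φ) {i : ι} {g : K i}
    (hg : g ∈ d.set i) (hg1 : g ≠ 1) : g ∉ (φ i).range := fun hr => hg1 <| by
  have h₁ := (d.compl i).equiv_fst_eq_self_of_mem_of_one_mem (d.one_mem i) hr
  have h₂ := (d.compl i).equiv_fst_eq_one_of_mem_of_one_mem (one_mem (φ i).range) hg
  exact (congrArg Subtype.val h₁).symm.trans (congrArg Subtype.val h₂)

theorem brittonNormalForm (hφ : ∀ i, Function.Injective (φ i)) :
    BrittonNormalForm (base φ).range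
      (fun p : {p : Σ i, K i // p.2 ∉ (φ p.1).range} => of p.1.1 p.1.2)
      (fun a b => a.1.1 ≠ b.1.1) where
  exists_eq_mul_prod x := by
    classical
    obtain ⟨d⟩ := NormalWord.transversal_nonempty φ hφ
    let w := NormalWord.equiv (d := d) x
    have hred : ∀ p ∈ w.toList, p.2 ∉ (φ p.1).range := fun ⟨i, g⟩ hp =>
      notMem_range_of_mem_set d (w.normalized i g hp) (w.ne_one _ hp)
    refine ⟨base φ w.head, ⟨_, rfl⟩, w.toList.attachWith _ hred,
      List.isChain_attachWith _ |>.2 (w.chain_ne.imp_of_mem_imp fun a b ha hb h =>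
        ⟨hred a ha, hred b hb, h⟩), ?_⟩
    have hx : x = NormalWord.prod w := (NormalWord.equiv.symm_apply_apply x).symm
    rw [hx, NormalWord.prod, List.attachWith_map_val (f := fun q : Σ i, K i => of q.1 q.2) hred]
    simp [Word.prod, map_list_prod, Function.comp_def, ofCoprodI_of]
  eq_nil_of_prod_mem {l} hl hmem := by
    have hval : ∀ p ∈ l.map Subtype.val, p.2 ∉ (φ p.1).range := by
      simp only [List.mem_map]
      rintro _ ⟨q, -, rfl⟩
      exact q.2
    let w : Word K := ⟨l.map Subtype.val, fun p hp h1 => hval p hp ⟨1, by simp [h1]⟩,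
      (List.isChain_map _).2 hl⟩
    have hw : w = .empty := Reduced.eq_empty_of_mem_range hφ hval <| by
      simpa only [w, Word.prod, map_list_prod, List.map_map, Function.comp_def, ofCoprodI_of]
    exact List.map_eq_nil_iff.1 (congrArg Word.toList hw)
  exists_mul_eq a s hs := by
    obtain ⟨⟨i, g⟩, hg⟩ := a
    obtain ⟨h, rfl⟩ := hs
    have hgh : g * φ i h ∉ (φ i).range := fun ⟨n, hn⟩ => hg ⟨n * h⁻¹, by simp [hn]⟩
    exact ⟨⟨⟨i, g * φ i h⟩, hgh⟩, by simp [← of_apply_eq_base φ i], fun _ hc => hc⟩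
  mul_mem_or_exists_mul_eq {a b} hab := by
    obtain ⟨⟨i, g⟩, hg⟩ := a
    obtain ⟨⟨j, g'⟩, hg'⟩ := b
    obtain rfl : i = j := not_not.1 hab
    by_cases h : g * g' ∈ (φ i).range
    · obtain ⟨n, hn⟩ := h
      exact .inl ⟨n, by simp [← of_apply_eq_base φ i, hn]⟩
    · exact .inr ⟨⟨⟨i, g * g'⟩, h⟩, (map_mul _ _ _).symm, fun _ hd => hd⟩

theorem isTorsionFree (hφ : ∀ i, Function.Injective (φ i)) (hN : Monoid.IsTorsionFree N)
    (hK : ∀ i, Monoid.IsTorsionFree (K i)) : Monoid.IsTorsionFree (PushoutI φ) :=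
  (brittonNormalForm hφ).isTorsionFree (hN.eq_one_of_mem_range (base_injective hφ))
    fun ⟨⟨i, g⟩, hg⟩ _ hfin => hg ⟨1, by
      rw [map_one, eq_comm]
      by_contra h1
      exact hK i g h1 ((of_injective hφ i).isOfFinOrder_iff.1 hfin)⟩

end Monoid.PushoutI

instance Monoid.Coprod.instCountable {M N : Type*} [Monoid M] [Monoid N] [Countable M]
    [Countable N] : Countable (Monoid.Coprod M N) :=
  Con.mk'_surjective.countable

instance Monoid.CoprodI.instCountable {ι : Type*} {M : ι → Type*} [∀ i, Monoid (M i)]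
    [Countable ι] [∀ i, Countable (M i)] : Countable (Monoid.CoprodI M) :=
  Con.mk'_surjective.countable

instance Monoid.PushoutI.instCountable {ι : Type*} {K : ι → Type*} [∀ i, Group (K i)]
    {N : Type*} [Group N] {φ : ∀ i, N →* K i} [Countable ι] [∀ i, Countable (K i)]
    [Countable N] : Countable (Monoid.PushoutI φ) :=
  Con.mk'_surjective.countable

instance HNNExtension.instCountable {G : Type*} [Group G] [Countable G] {A B : Subgroup G}
    {φ : A ≃* B} : Countable (HNNExtension G A B φ) :=
  Con.mk'_surjective.countable

section ZPowers

variable {G : Type*} [Group G] {α β : G}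

theorem injective_zpowersHom_s4 (hα : ¬IsOfFinOrder α) : Function.Injective (zpowersHom G α) :=
  (injective_zpow_iff_not_isOfFinOrder.2 hα).comp Multiplicative.toAdd.injective

noncomputable def zpowersHomRangeEquiv (hα : ¬IsOfFinOrder α) (hβ : ¬IsOfFinOrder β) :
    (zpowersHom G α).range ≃* (zpowersHom G β).range :=
  (MonoidHom.ofInjective (injective_zpowersHom_s4 hα)).symm.trans
    (MonoidHom.ofInjective (injective_zpowersHom_s4 hβ))

theorem zpowersHomRangeEquiv_apply_self (hα : ¬IsOfFinOrder α) (hβ : ¬IsOfFinOrder β) :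
    (zpowersHomRangeEquiv hα hβ ⟨α, Multiplicative.ofAdd 1, by simp⟩ : G) = β := by
  have hα' : (⟨α, Multiplicative.ofAdd 1, by simp⟩ : (zpowersHom G α).range) =
      MonoidHom.ofInjective (injective_zpowersHom_s4 hα) (Multiplicative.ofAdd 1) :=
    Subtype.ext (by simp [MonoidHom.ofInjective_apply])
  simp [zpowersHomRangeEquiv, hα', MonoidHom.ofInjective_apply]

theorem HNNExtension.conj_of_zpowersHomRangeEquiv (hα : ¬IsOfFinOrder α)
    (hβ : ¬IsOfFinOrder β) :
    (t * of α * t⁻¹ : HNNExtension G _ _ (zpowersHomRangeEquiv hα hβ)) = of β := by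
  have := equiv_eq_conj (φ := zpowersHomRangeEquiv hα hβ) ⟨α, Multiplicative.ofAdd 1, by simp⟩
  rwa [zpowersHomRangeEquiv_apply_self, eq_comm] at this

end ZPowers

/-- Every torsion-free group embeds in a torsion-free group in which the images of
any two non-identity elements of the original group are conjugate; if the original
group is countable, the bigger group can be chosen countable. -/
theorem stmt4 (G : Type u) [Group G] (hG : Monoid.IsTorsionFree G) :
    ∃ (H : Type u) (_ : Group H) (ι : G →* H),
      Function.Injective ι ∧
      Monoid.IsTorsionFree H ∧
      (∀ α β : G, α ≠ 1 → β ≠ 1 → ∃ t : H, t⁻¹ * ι α * t = ι β) ∧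
      (Countable G → Countable H) := by
  let K (p : {p : G × G // p.1 ≠ 1 ∧ p.2 ≠ 1}) : Type u :=
    HNNExtension G _ _ (zpowersHomRangeEquiv (hG _ p.2.1) (hG _ p.2.2))
  let φ p : G →* K p := HNNExtension.of
  have hφ p : Function.Injective (φ p) := HNNExtension.of_injective _
  refine ⟨Monoid.PushoutI φ, inferInstance, Monoid.PushoutI.base φ,
    Monoid.PushoutI.base_injective hφ,
    Monoid.PushoutI.isTorsionFree hφ hG fun _ => HNNExtension.isTorsionFree _ hG,
    fun α β hα hβ => ⟨Monoid.PushoutI.of ⟨(α, β), hα, hβ⟩ HNNExtension.t⁻¹, ?_⟩,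
    fun _ => inferInstance⟩
  have hbase (x : G) : Monoid.PushoutI.of ⟨(α, β), hα, hβ⟩ (HNNExtension.of x : K _) =
      Monoid.PushoutI.base φ x := Monoid.PushoutI.of_apply_eq_base φ _ x
  simpa only [map_mul, map_inv, inv_inv, hbase] using
    congrArg (Monoid.PushoutI.of (φ := φ) ⟨(α, β), hα, hβ⟩)
    (HNNExtension.conj_of_zpowersHomRangeEquiv (hG α hα) (hG β hβ))
end
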